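/- Suppose S₁,…,S_K are affine subspaces of 𝔽₂^n, each of size at least T, with K · T · binom(n − log₂ T, ≤ ⌊δn/2⌋) > 2^n. Then some two distinct subspaces S_i, S_j contain points at Hamming distance at most 2⌊δn/2⌋ ≤ δn; in particular, {S₁,…,S_K} is not a (K, T, δ, n)-subset code. -/

import Mathlib

def IsSubsetCode (K T : ℕ) (δ : ℝ) (n : ℕ) (S : Fin K → Set (Fin n → ZMod 2)) : Prop :=
  (∀ p, T ≤ (S p).ncard) ∧
  ∀ p q, p ≠ q → ∀ x ∈ S p, ∀ y ∈ S q, δ * n < (hammingDist x y : ℝ)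

/-- `|B(t)|` in `𝔽₂^m`: `binom(m, ≤ t)`. -/
def ballCount (m t : ℕ) : ℕ := ∑ s ∈ Finset.range (t + 1), m.choose s

/-!
An affine subspace `u + V` with `|V| ≥ 2^d` shatters some `d` coordinates `I`: restricting to `I`
is onto `𝔽₂^I` (grow `I` one coordinate at a time, using a nonzero vector of `V` vanishing on `I`,
which exists by rank–nullity). Flipping at most `t` coordinates outside `I` of the points of
`u + V` then yields `2^d · binom(n - d, ≤ t)` distinct points within distance `t`, so if the
`t`-neighbourhoods of the `K` subspaces overflow `𝔽₂^n` two of them meet, and the triangle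
inequality gives two points at distance at most `2t`.
-/

open Finset Module Pointwise

variable {ι K : Type*}

def ShattersCoords (S : Set (ι → K)) (I : Finset ι) : Prop :=
  Set.SurjOn I.restrict S Set.univ

theorem ShattersCoords.vadd [AddGroup K] {S : Set (ι → K)} {I : Finset ι}
    (hS : ShattersCoords S I) (u : ι → K) : ShattersCoords (u +ᵥ S) I := by
  intro a _
  obtain ⟨v, hv, hva⟩ := hS (Set.mem_univ (-I.restrict u + a))
  refine ⟨u + v, Set.vadd_mem_vadd_set hv, ?_⟩
  rw [← add_neg_cancel_left (I.restrict u) a, ← hva]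
  rfl

theorem surjective_restrict_of_shattersCoords [Field K] {V : Submodule K (ι → K)} {I : Finset ι}
    (hV : ShattersCoords (V : Set (ι → K)) I) :
    Function.Surjective ((LinearMap.funLeft K K ((↑) : I → ι)).comp V.subtype) := by
  intro a
  obtain ⟨v, hv, rfl⟩ := hV (Set.mem_univ a)
  exact ⟨⟨v, hv⟩, rfl⟩

theorem Submodule.exists_shattersCoords_of_le_finrank [Field K] [Finite ι]
    (V : Submodule K (ι → K)) {d : ℕ} (hd : d ≤ finrank K V) :
    ∃ I : Finset ι, #I = d ∧ ShattersCoords (V : Set (ι → K)) I := by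
  classical
  induction d with
  | zero => exact ⟨∅, rfl, fun a _ => ⟨0, V.zero_mem, Subsingleton.elim _ _⟩⟩
  | succ d ih =>
    obtain ⟨I, hIcard, hI⟩ := ih (by omega)
    set ρ := (LinearMap.funLeft K K ((↑) : I → ι)).comp V.subtype
    have hker : LinearMap.ker ρ ≠ ⊥ := by
      refine mt Submodule.finrank_eq_zero.2 ?_
      have := ρ.finrank_range_add_finrank_ker
      rw [LinearMap.range_eq_top.2 (surjective_restrict_of_shattersCoords hI), finrank_top,
        finrank_fintype_fun_eq_card, Fintype.card_coe, hIcard] at this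
      omega
    obtain ⟨⟨w, hwV⟩, hwρ, hw0⟩ := Submodule.exists_mem_ne_zero_of_ne_bot hker
    have hwI : ∀ j ∈ I, w j = 0 := fun j hj => congrFun hwρ ⟨j, hj⟩
    obtain ⟨i, hi⟩ : ∃ i, w i ≠ 0 := Function.ne_iff.1 fun h => hw0 (Subtype.ext h)
    have hiI : i ∉ I := fun h => hi (hwI i h)
    refine ⟨insert i I, by rw [card_insert_of_notMem hiI, hIcard], fun b _ => ?_⟩
    obtain ⟨v, hv, hvb⟩ := hI (Set.mem_univ fun j : I => b ⟨j, mem_insert_of_mem j.2⟩)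
    refine ⟨v + ((b ⟨i, mem_insert_self i I⟩ - v i) / w i) • w, V.add_mem hv (V.smul_mem _ hwV), ?_⟩
    funext ⟨j, hj⟩
    rcases mem_insert.1 hj with rfl | hjI
    · simp [hi]
    · simpa [hwI j hjI] using congrFun hvb ⟨j, hjI⟩

theorem Submodule.le_finrank_of_pow_card_le_ncard {M : Type*} [Field K] [Finite K] [AddCommGroup M]
    [Module K M] (V : Submodule K M) [Module.Finite K V] {d : ℕ}
    (h : Nat.card K ^ d ≤ (V : Set M).ncard) : d ≤ finrank K V := by
  rwa [← Nat.card_coe_set_eq, SetLike.coe_sort_coe, natCard_eq_pow_finrank (K := K) (V := V),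
    Nat.pow_le_pow_iff_right Finite.one_lt_card] at h

theorem card_filter_card_le_powerset {α : Type*} (s : Finset α) (t : ℕ) :
    #{u ∈ s.powerset | #u ≤ t} = ballCount #s t := by
  classical
  rw [card_eq_sum_card_fiberwise (f := card) (t := range (t + 1)) fun u hu => by
    simp only [coe_filter, Set.mem_ofPred_eq] at hu; simp [hu.2]]
  refine sum_congr rfl fun k hk => ?_
  rw [← card_powersetCard, powersetCard_eq_filter, filter_filter]
  refine congrArg card (filter_congr fun u _ => ⟨And.right, fun hu => ⟨?_, hu⟩⟩)
  rw [mem_range] at hk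
  omega

section HammingNbhd

variable [Fintype ι] [Fintype K] [DecidableEq K]

open Classical in
noncomputable def hammingNbhd (S : Set (ι → K)) (t : ℕ) : Finset (ι → K) :=
  {w | ∃ x ∈ S, hammingDist w x ≤ t}

theorem mem_hammingNbhd {S : Set (ι → K)} {t : ℕ} {w : ι → K} :
    w ∈ hammingNbhd S t ↔ ∃ x ∈ S, hammingDist w x ≤ t := by
  simp [hammingNbhd]

theorem exists_hammingDist_le_of_card_lt_sum {κ : Type*} [Fintype κ] (S : κ → Set (ι → K))
    (t : ℕ) (h : Fintype.card K ^ Fintype.card ι < ∑ p, #(hammingNbhd (S p) t)) :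
    ∃ p q, p ≠ q ∧ ∃ x ∈ S p, ∃ y ∈ S q, hammingDist x y ≤ 2 * t := by
  classical
  by_contra! hfar
  have hdisj : ((univ : Finset κ) : Set κ).PairwiseDisjoint fun p => hammingNbhd (S p) t := by
    refine fun p _ q _ hpq => disjoint_left.2 fun w hwp hwq => ?_
    obtain ⟨x, hx, hxw⟩ := mem_hammingNbhd.1 hwp
    obtain ⟨y, hy, hyw⟩ := mem_hammingNbhd.1 hwq
    have := hammingDist_triangle_left x y w
    have := hfar p q hpq x hx y hy
    omega
  have := card_le_univ (univ.biUnion fun p => hammingNbhd (S p) t)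
  rw [card_biUnion hdisj, Fintype.card_fun] at this
  omega

theorem ShattersCoords.card_pow_mul_ballCount_le_card_hammingNbhd [AddGroupWithOne K]
    [NeZero (1 : K)] {S : Set (ι → K)} {I : Finset ι} (hS : ShattersCoords S I) (t : ℕ) :
    Fintype.card K ^ #I * ballCount (Fintype.card ι - #I) t ≤ #(hammingNbhd S t) := by
  classical
  choose g hgS hgI using fun a : I → K => hS (Set.mem_univ a)
  set e : Finset ι → ι → K := fun s j => if j ∈ s then 1 else 0
  have hdist (x : ι → K) (s : Finset ι) : hammingDist (x + e s) x = #s := by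
    unfold hammingDist
    congr 1
    ext j
    by_cases hj : j ∈ s <;> simp [e, hj]
  have he_inj : Function.Injective e := fun s s' h => by
    ext j
    have := congrFun h j
    by_cases hj : j ∈ s <;> by_cases hj' : j ∈ s' <;> simp_all [e]
  have he_restrict (s : Finset ι) (hs : s ⊆ Iᶜ) : I.restrict (e s) = 0 := by
    funext ⟨j, hj⟩
    have : j ∉ s := fun h => mem_compl.1 (hs h) hj
    simp [e, Finset.restrict, this]
  calc Fintype.card K ^ #I * ballCount (Fintype.card ι - #I) t
      = #((univ : Finset (I → K)) ×ˢ {s ∈ Iᶜ.powerset | #s ≤ t}) := by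
        rw [card_product, card_filter_card_le_powerset, card_compl, card_univ, Fintype.card_fun,
          Fintype.card_coe]
    _ ≤ #(hammingNbhd S t) := by
      refine card_le_card_of_injOn (fun p => g p.1 + e p.2) ?_ ?_
      · rintro ⟨a, s⟩ hs
        simp only [coe_product, coe_filter, mem_powerset, Set.mem_prod, Set.mem_ofPred_eq] at hs
        exact mem_hammingNbhd.2 ⟨g a, hgS a, (hdist _ _).trans_le hs.2.2⟩
      · rintro ⟨a, s⟩ hs ⟨a', s'⟩ hs' h
        simp only [coe_product, coe_filter, mem_powerset, Set.mem_prod, Set.mem_ofPred_eq] at hs hs' h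
        have ha : a = a' := by
          have := congrArg I.restrict h
          change I.restrict (g a) + I.restrict (e s) = I.restrict (g a') + I.restrict (e s') at this
          rwa [hgI, hgI, he_restrict s hs.2.1, he_restrict s' hs'.2.1, add_zero, add_zero] at this
        subst ha
        rw [he_inj (add_left_cancel h)]

end HammingNbhd

/-- If `S₁, …, S_K` are affine subspaces of `𝔽₂^n`, each of size at least `T = 2^d`,
and `K · T · binom(n − d, ≤ ⌊δn/2⌋) > 2^n`, then two distinct subspaces contain points
at Hamming distance at most `2⌊δn/2⌋ ≤ δn`; in particular they do not form a
`(K, T, δ, n)`-subset code. -/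
theorem no_linear_subset_code
    (n K d : ℕ) (δ : ℝ) (hδ : 0 ≤ δ)
    (S : Fin K → Set (Fin n → ZMod 2))
    (hAff : ∀ p, ∃ (u : Fin n → ZMod 2) (V : Submodule (ZMod 2) (Fin n → ZMod 2)),
      S p = {w | ∃ v ∈ V, w = u + v})
    (hSize : ∀ p, 2 ^ d ≤ (S p).ncard)
    (hbig : 2 ^ n < K * 2 ^ d * ballCount (n - d) ⌊δ * n / 2⌋₊) :
    (∃ p q : Fin K, p ≠ q ∧ ∃ x ∈ S p, ∃ y ∈ S q,
      (hammingDist x y : ℝ) ≤ 2 * (⌊δ * n / 2⌋₊ : ℝ)) ∧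
    ¬ IsSubsetCode K (2 ^ d) δ n S := by
  set t := ⌊δ * n / 2⌋₊
  have hnbhd (p : Fin K) : 2 ^ d * ballCount (n - d) t ≤ #(hammingNbhd (S p) t) := by
    obtain ⟨u, V, hSV⟩ := hAff p
    have hS : S p = u +ᵥ (V : Set (Fin n → ZMod 2)) := by
      ext w
      simp [hSV, Set.mem_vadd_set, eq_comm]
    have hd : d ≤ finrank (ZMod 2) V := V.le_finrank_of_pow_card_le_ncard <| by
      rw [Nat.card_zmod, ← Set.ncard_vadd_set u, ← hS]
      exact hSize p
    obtain ⟨I, hI, hVI⟩ := V.exists_shattersCoords_of_le_finrank hd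
    simpa [hS, hI] using (hVI.vadd u).card_pow_mul_ballCount_le_card_hammingNbhd t
  obtain ⟨p, q, hpq, x, hx, y, hy, hxy⟩ := exists_hammingDist_le_of_card_lt_sum S t <| by
    have := card_nsmul_le_sum univ _ _ fun p _ => hnbhd p
    rw [card_univ, Fintype.card_fin, smul_eq_mul, ← mul_assoc] at this
    simpa using hbig.trans_le this
  have hxy' : (hammingDist x y : ℝ) ≤ 2 * t := by exact_mod_cast hxy
  have h2t : 2 * (t : ℝ) ≤ δ * n := by
    have := Nat.floor_le (by positivity : 0 ≤ δ * n / 2)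
    linarith
  refine ⟨⟨p, q, hpq, x, hx, y, hy, hxy'⟩, fun hcode => ?_⟩
  linarith [hcode.2 p q hpq x hx y hy]
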